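/- Let t ≠ C be real and U(z) = i(z² − 2i(t−C))/(|z|² + |z² + 2i(t−C)|²). Then the vector ψ = (1/(|z|² + |z² + 2i(t−C)|²))·(z̄, −iz² + 2(t−C))ᵀ satisfies ∂ψ₂ + Uψ₁ = 0 and −∂̄ψ₁ + Ūψ₂ = 0 at every point z ∈ ℂ. -/

import Mathlib

open Complex

noncomputable def pd1 (f : ℝ → ℝ → ℂ) : ℝ → ℝ → ℂ := fun x y => deriv (fun x' => f x' y) x
noncomputable def pd2 (f : ℝ → ℝ → ℂ) : ℝ → ℝ → ℂ := fun x y => deriv (fun y' => f x y') y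
noncomputable def del (f : ℝ → ℝ → ℂ) : ℝ → ℝ → ℂ :=
  fun x y => (pd1 f x y - Complex.I * pd2 f x y) / 2
noncomputable def delbar (f : ℝ → ℝ → ℂ) : ℝ → ℝ → ℂ :=
  fun x y => (pd1 f x y + Complex.I * pd2 f x y) / 2

/-- z = x + iy -/
noncomputable def zc (x y : ℝ) : ℂ := (x : ℂ) + Complex.I * (y : ℂ)

/-- |z|² + |z² + 2i(t−C)|² -/
noncomputable def denomDS (C t x y : ℝ) : ℝ :=
  (‖zc x y‖)^2 + (‖(zc x y)^2 + 2*Complex.I*((t - C : ℝ) : ℂ)‖)^2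

/-- U = i(z² − 2i(t−C))/(|z|² + |z² + 2i(t−C)|²) -/
noncomputable def UDS (C t : ℝ) : ℝ → ℝ → ℂ := fun x y =>
  Complex.I * ((zc x y)^2 - 2*Complex.I*((t - C : ℝ) : ℂ)) / ((denomDS C t x y : ℝ) : ℂ)

/-- ψ₁ = z̄/(|z|² + |z² + 2i(t−C)|²) -/
noncomputable def psi1DS (C t : ℝ) : ℝ → ℝ → ℂ := fun x y =>
  (starRingEnd ℂ) (zc x y) / ((denomDS C t x y : ℝ) : ℂ)

/-- ψ₂ = (−iz² + 2(t−C))/(|z|² + |z² + 2i(t−C)|²) -/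
noncomputable def psi2DS (C t : ℝ) : ℝ → ℝ → ℂ := fun x y =>
  (-Complex.I * (zc x y)^2 + 2*((t - C : ℝ) : ℂ)) / ((denomDS C t x y : ℝ) : ℂ)

/-!
Write `w = z² + 2is` with `s = t - C`, so that `D = |z|² + |w|² = z z̄ + w w̄`, `ψ₁ = z̄ / D` and
`ψ₂ = -i w / D`. Treating `z` and `z̄` as independent variables, `∂D = z̄ + 2z w̄` and
`∂̄D = z + 2w z̄`, and the quotient rule gives `∂ψ₂ = -i z̄ (z² - 2is) / D² = -U ψ₁` and
`∂̄ψ₁ = w (w̄ - 2z̄²) / D² = Ū ψ₂`. Since `t ≠ C`, `z` and `w` never vanish together, so `D > 0`.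
-/

open ComplexConjugate

/-- `a` and `b` are the Wirtinger derivatives `∂f` and `∂̄f` at `(x, y)`. -/
def HasWirtingerAt (f : ℝ → ℝ → ℂ) (a b : ℂ) (x y : ℝ) : Prop :=
  HasDerivAt (fun x' => f x' y) (a + b) x ∧ HasDerivAt (fun y' => f x y') (I * (a - b)) y

namespace HasWirtingerAt

variable {f g : ℝ → ℝ → ℂ} {a b c d : ℂ} {x y : ℝ}

theorem del_eq (h : HasWirtingerAt f a b x y) : del f x y = a := by
  rw [del, pd1, pd2, h.1.deriv, h.2.deriv]
  linear_combination -(a - b) / 2 * I_sq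

theorem delbar_eq (h : HasWirtingerAt f a b x y) : delbar f x y = b := by
  rw [delbar, pd1, pd2, h.1.deriv, h.2.deriv]
  linear_combination (a - b) / 2 * I_sq

theorem const (c : ℂ) (x y : ℝ) : HasWirtingerAt (fun _ _ => c) 0 0 x y :=
  ⟨by simpa using hasDerivAt_const x c, by simpa using hasDerivAt_const y c⟩

theorem zc (x y : ℝ) : HasWirtingerAt zc 1 0 x y :=
  ⟨((hasDerivAt_id x).ofReal_comp.add_const (I * y)).congr_deriv (by simp),
    (((hasDerivAt_id y).ofReal_comp.const_mul I).const_add (x : ℂ)).congr_deriv (by simp)⟩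

theorem star (h : HasWirtingerAt f a b x y) :
    HasWirtingerAt (fun x y => conj (f x y)) (conj b) (conj a) x y := by
  refine ⟨h.1.star.congr_deriv ?_, h.2.star.congr_deriv ?_⟩
  · simp only [star_def, map_add]; ring
  · simp only [star_def, map_mul, map_sub, conj_I]; ring

theorem add (hf : HasWirtingerAt f a b x y) (hg : HasWirtingerAt g c d x y) :
    HasWirtingerAt (fun x y => f x y + g x y) (a + c) (b + d) x y :=
  ⟨(hf.1.fun_add hg.1).congr_deriv (by ring), (hf.2.fun_add hg.2).congr_deriv (by ring)⟩

theorem mul (hf : HasWirtingerAt f a b x y) (hg : HasWirtingerAt g c d x y) :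
    HasWirtingerAt (fun x y => f x y * g x y)
      (a * g x y + f x y * c) (b * g x y + f x y * d) x y :=
  ⟨(hf.1.fun_mul hg.1).congr_deriv (by ring), (hf.2.fun_mul hg.2).congr_deriv (by ring)⟩

theorem pow (hf : HasWirtingerAt f a b x y) (n : ℕ) :
    HasWirtingerAt (fun x y => f x y ^ n)
      (n * f x y ^ (n - 1) * a) (n * f x y ^ (n - 1) * b) x y :=
  ⟨(hf.1.fun_pow n).congr_deriv (by ring), (hf.2.fun_pow n).congr_deriv (by ring)⟩

theorem div (hf : HasWirtingerAt f a b x y) (hg : HasWirtingerAt g c d x y) (hg₀ : g x y ≠ 0) :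
    HasWirtingerAt (fun x y => f x y / g x y)
      ((a * g x y - f x y * c) / g x y ^ 2) ((b * g x y - f x y * d) / g x y ^ 2) x y :=
  ⟨(hf.1.fun_div hg.1 hg₀).congr_deriv (by ring), (hf.2.fun_div hg.2 hg₀).congr_deriv (by ring)⟩

end HasWirtingerAt

theorem ofReal_denomDS (C t x y : ℝ) :
    (denomDS C t x y : ℂ) = zc x y * conj (zc x y) +
      (zc x y ^ 2 + 2 * I * ((t - C : ℝ) : ℂ)) * conj (zc x y ^ 2 + 2 * I * ((t - C : ℝ) : ℂ)) := by
  simp only [denomDS, mul_conj']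
  push_cast
  ring

theorem denomDS_pos {C t : ℝ} (ht : t ≠ C) (x y : ℝ) : 0 < denomDS C t x y := by
  rcases eq_or_ne (zc x y) 0 with hz | hz
  · have hw : zc x y ^ 2 + 2 * I * ((t - C : ℝ) : ℂ) ≠ 0 := by
      simpa [hz, I_ne_zero, sub_eq_zero] using ht
    unfold denomDS
    positivity
  · unfold denomDS
    positivity

theorem hasWirtingerAt_denomDS (C t x y : ℝ) :
    HasWirtingerAt (fun x y => (denomDS C t x y : ℂ))
      (conj (zc x y) + 2 * zc x y * conj (zc x y ^ 2 + 2 * I * ((t - C : ℝ) : ℂ)))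
      (zc x y + 2 * (zc x y ^ 2 + 2 * I * ((t - C : ℝ) : ℂ)) * conj (zc x y)) x y := by
  have hz := HasWirtingerAt.zc x y
  have hw : HasWirtingerAt (fun x y => zc x y ^ 2 + 2 * I * ((t - C : ℝ) : ℂ))
      (2 * zc x y) 0 x y := by
    convert (hz.pow 2).add (HasWirtingerAt.const (2 * I * ((t - C : ℝ) : ℂ)) x y) using 1 <;> simp
  simp only [ofReal_denomDS]
  convert (hz.mul hz.star).add (hw.mul hw.star) using 1 <;>
    simp only [map_zero, map_one, map_mul, map_ofNat] <;> ring

theorem dsii_dirac_zero_level (C t : ℝ) (ht : t ≠ C) (x y : ℝ) :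
    del (psi2DS C t) x y + UDS C t x y * psi1DS C t x y = 0 ∧
    -(delbar (psi1DS C t) x y) + (starRingEnd ℂ) (UDS C t x y) * psi2DS C t x y = 0 := by
  have hD := hasWirtingerAt_denomDS C t x y
  have hD₀ : (denomDS C t x y : ℂ) ≠ 0 := ofReal_ne_zero.mpr (denomDS_pos ht x y).ne'
  have hz := HasWirtingerAt.zc x y
  have hψ₁ : HasWirtingerAt (psi1DS C t) _ _ x y := hz.star.div hD hD₀
  have hψ₂ : HasWirtingerAt (psi2DS C t) _ _ x y :=
    (((HasWirtingerAt.const (-I) x y).mul (hz.pow 2)).add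
      (HasWirtingerAt.const (2 * ((t - C : ℝ) : ℂ)) x y)).div hD hD₀
  rw [hψ₂.del_eq, hψ₁.delbar_eq]
  have hDz := ofReal_denomDS C t x y
  simp only [UDS, psi1DS, psi2DS, map_div₀, map_mul, map_sub, map_add, map_pow, conj_I,
    conj_ofReal, map_one, map_ofNat] at hDz ⊢
  set z := zc x y
  set s : ℂ := ((t - C : ℝ) : ℂ)
  set D : ℂ := (denomDS C t x y : ℂ)
  constructor
  · field_simp
    linear_combination
      (-2 * I * z) * hDz + (-2 * s * (conj z + 2 * z * (conj z ^ 2 - 2 * I * s))) * I_sq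
  · field_simp
    linear_combination -hDz + (conj z ^ 2 * z ^ 2 + 2 * z ^ 2 * I * s) * I_sq
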